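/- arXiv:0908.2272 — 2 statements merged into one kernel-verified Lean document; each statement's English description precedes it below -/
import Mathlib

section
/- Let F be a group, let ρ₀ : F → PSL(2,ℝ) be a faithful homomorphism with discrete image, acting on the real projective line ℝP¹ (the set of points of ℂP¹ admitting real homogeneous coordinates), and let ρ : F → PSL(2,ℂ) be any homomorphism. Let π : ℝP¹ → ℂP¹ be a continuous map satisfying π(ρ₀(g)·a) = ρ(g)·π(a) for all g ∈ F and a ∈ ℝP¹. If x ∈ ℂP¹ is such that π⁻¹(x) is finite with at least two elements, then x is not a conical limit point of ρ(F): there is no sequence of pairwise distinct elements γ_n ∈ ρ(F) and points x⁺ ≠ x⁻ in ℂP¹ such that γ_n(x) → x⁺ and the γ_n converge to the constant map with value x⁻ uniformly on compact subsets of ℂP¹ ∖ {x}. -/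
set_option synthInstance.maxHeartbeats 1000000

noncomputable section

/-- `SL(2,ℂ)`. -/
abbrev SL2C := Matrix.SpecialLinearGroup (Fin 2) ℂ

/-- `PSL(2,ℂ) = SL(2,ℂ)/{±I}`, the quotient of `SL(2,ℂ)` by its center. -/
abbrev PSL2C := Matrix.ProjectiveSpecialLinearGroup (Fin 2) ℂ

/-- The complex projective line `ℂP¹`, the projectivization of `ℂ²`. -/
abbrev CP1 := Projectivization ℂ (Fin 2 → ℂ)

instance : TopologicalSpace SL2C := instTopologicalSpaceSubtype
instance : TopologicalSpace CP1 := instTopologicalSpaceQuotient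

theorem projmk_congr {v w : Fin 2 → ℂ} (hv : v ≠ 0) (h : v = w) :
    Projectivization.mk ℂ v hv = Projectivization.mk ℂ w (h ▸ hv) := by subst h; rfl

/-- The action of `SL(2,ℂ)` on `ℂP¹` by Möbius transformations. -/
def sl2smul (g : SL2C) (x : CP1) : CP1 :=
  Projectivization.map (Matrix.SpecialLinearGroup.toLin' g).toLinearMap
    (Matrix.SpecialLinearGroup.toLin' g).injective x

theorem sl2smul_mk (g : SL2C) (v : Fin 2 → ℂ) (hv : v ≠ 0) :
    sl2smul g (Projectivization.mk ℂ v hv) =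
      Projectivization.mk ℂ (Matrix.SpecialLinearGroup.toLin' g v)
        (fun h => hv (by simpa using (Matrix.SpecialLinearGroup.toLin' g).map_eq_zero_iff.mp h)) := by
  simp [sl2smul, Projectivization.map_mk]

instance : MulAction SL2C CP1 where
  smul := sl2smul
  one_smul x := by
    induction x using Projectivization.ind with
    | h v hv => show sl2smul 1 _ = _; rw [sl2smul_mk]; simp
  mul_smul g h x := by
    induction x using Projectivization.ind with
    | h v hv =>
      show sl2smul (g * h) _ = sl2smul g (sl2smul h _)
      rw [sl2smul_mk, sl2smul_mk, sl2smul_mk]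
      exact projmk_congr _ (by simp)

/-- The center of `SL(2,ℂ)` acts trivially on `ℂP¹`. -/
theorem center_sl2smul_eq (A : SL2C) (hA : A ∈ Subgroup.center SL2C) (x : CP1) :
    sl2smul A x = x := by
  obtain ⟨r, hr, hrA⟩ := Matrix.SpecialLinearGroup.mem_center_iff.mp hA
  have hr0 : r ≠ 0 := by
    intro h
    rw [h] at hr
    simp at hr
  induction x using Projectivization.ind with
  | h v hv =>
    rw [sl2smul_mk, Projectivization.mk_eq_mk_iff]
    refine ⟨Units.mk0 r hr0, ?_⟩
    have h1 : Matrix.SpecialLinearGroup.toLin' A v = (A : Matrix (Fin 2) (Fin 2) ℂ).mulVec v := by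
      rw [Matrix.SpecialLinearGroup.toLin'_apply, Matrix.toLin'_apply]
    rw [h1, ← hrA, Matrix.scalar_apply]
    ext i
    rw [Matrix.mulVec_diagonal]
    simp [Units.smul_def]

/-- The action of `PSL(2,ℂ)` on `ℂP¹`, descended from the action of `SL(2,ℂ)`. -/
def psl2Perm : PSL2C →* Equiv.Perm CP1 :=
  QuotientGroup.lift (Subgroup.center SL2C) (MulAction.toPermHom SL2C CP1)
    (fun A hA => Equiv.ext fun x => center_sl2smul_eq A hA x)

instance (priority := 2000) : SMul PSL2C CP1 := ⟨fun g x => psl2Perm g x⟩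

instance (priority := 2000) : MulAction PSL2C CP1 where
  one_smul x := by show psl2Perm 1 x = x; simp
  mul_smul g h x := by
    show psl2Perm (g * h) x = psl2Perm g (psl2Perm h x)
    simp [map_mul]


/-! ### Basic definitions: limit sets, commensurators, parabolicity, lattices -/

open Filter Topology

/-- The sequence `γ` of elements of `PSL(2,ℂ)` converges to the constant map with value `p`
uniformly on compact subsets of `ℂP¹ ∖ {q}`.  (Since `ℂP¹` is a compact Hausdorff space, its
uniform structure is unique, and uniform convergence to a constant `p` on a set `K` is
equivalent to the requirement that for every neighbourhood `U` of `p`, eventually all the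
images of `K` lie in `U`.) -/
def TendstoConstUniformlyAway (γ : ℕ → PSL2C) (q p : CP1) : Prop :=
  ∀ U ∈ 𝓝 p, ∀ K : Set CP1, IsCompact K → q ∉ K →
    ∀ᶠ n in atTop, ∀ x ∈ K, γ n • x ∈ U

/-- The limit set `Λ_Γ ⊆ ℂP¹` of a subgroup `Γ ≤ PSL(2,ℂ)`: the set of points `p` for which
there exist a point `q` and a sequence of pairwise distinct elements of `Γ` converging to the
constant map `p` uniformly on compact subsets of `ℂP¹ ∖ {q}`. -/
def limitSet (Γ : Subgroup PSL2C) : Set CP1 :=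
  {p | ∃ q : CP1, ∃ γ : ℕ → PSL2C, (∀ n, γ n ∈ Γ) ∧ Function.Injective γ ∧
    TendstoConstUniformlyAway γ q p}

/-- `ℝP¹ ⊆ ℂP¹`: the set of points admitting real homogeneous coordinates. -/
def realPoints : Set CP1 :=
  {x | ∃ (w : Fin 2 → ℂ) (hw : w ≠ 0), (∀ i, (w i).im = 0) ∧ x = Projectivization.mk ℂ w hw}

/-- A round circle in `ℂP¹` is a set of the form `g • ℝP¹` with `g ∈ PSL(2,ℂ)`. -/
def IsRoundCircle (C : Set CP1) : Prop :=
  ∃ g : PSL2C, C = (g • ·) '' realPoints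

/-- An element of `PSL(2,ℂ)` is parabolic if it is not the identity and some (equivalently, any)
matrix lift to `SL(2,ℂ)` has trace `±2`. -/
def IsParabolic (g : PSL2C) : Prop :=
  g ≠ 1 ∧ ∃ A : SL2C, (QuotientGroup.mk A : PSL2C) = g ∧
    (Matrix.trace (A : Matrix (Fin 2) (Fin 2) ℂ) = 2 ∨
      Matrix.trace (A : Matrix (Fin 2) (Fin 2) ℂ) = -2)

instance : MeasurableSpace PSL2C := borel _
instance (Δ : Subgroup PSL2C) : MeasurableSpace (PSL2C ⧸ Δ) := borel _

/-- A subgroup `Δ ≤ PSL(2,ℂ)` is a lattice if it is discrete and the quotient `PSL(2,ℂ)/Δ`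
carries a nonzero finite `PSL(2,ℂ)`-invariant Borel measure. -/
def IsLattice (Δ : Subgroup PSL2C) : Prop :=
  DiscreteTopology Δ ∧
  ∃ μ : MeasureTheory.Measure (PSL2C ⧸ Δ), μ ≠ 0 ∧ μ Set.univ < ⊤ ∧
    ∀ g : PSL2C, MeasureTheory.Measure.map (fun y => g • y) μ = μ

/-- A discrete subgroup `Γ ≤ PSL(2,ℂ)` is a fibre group if it is a normal subgroup of some
lattice `Δ ≤ PSL(2,ℂ)` with `Δ/Γ` infinite cyclic or infinite dihedral; equivalently, `Γ` is
the kernel of a surjective homomorphism from a lattice `Δ` onto `ℤ` or onto the infinite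
dihedral group. -/
def IsFibreGroup (Γ : Subgroup PSL2C) : Prop :=
  ∃ Δ : Subgroup PSL2C, IsLattice Δ ∧ Γ ≤ Δ ∧
    ((∃ f : Δ →* Multiplicative ℤ, Function.Surjective f ∧ f.ker = Γ.subgroupOf Δ) ∨
     (∃ f : Δ →* DihedralGroup 0, Function.Surjective f ∧ f.ker = Γ.subgroupOf Δ))


/-- `PSL(2,ℝ)` viewed as a subgroup of `PSL(2,ℂ)`: the image of `SL(2,ℝ)` under the
entrywise inclusion `SL(2,ℝ) → SL(2,ℂ)` followed by the quotient map to `PSL(2,ℂ)`. -/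
def PSL2R : Subgroup PSL2C :=
  ((QuotientGroup.mk' (Subgroup.center SL2C)).comp
    (Matrix.SpecialLinearGroup.map (algebraMap ℝ ℂ))).range

/-!
Write `γ n = ρ (g n)` and lift `ρ₀ (g n)` to `A n ∈ SL(2,ℂ)`. Discreteness of `ρ₀(F)` forces
`‖A n‖ → ∞`, so a subsequence of `A n / ‖A n‖` converges to a matrix `B` of rank one, and along
it `ρ₀ (g n) • z → p := [im B]` for every `z ≠ [ker B]`; moreover `p ∈ ℝP¹`, which is closed.
Since `x` has two preimages, one of them, `a₀`, avoids `[ker B]`; since `π⁻¹(x)` is finite, some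
`c ∈ ℝP¹ ∖ π⁻¹(x)` avoids it too. By equivariance `γ n • x = π (ρ₀ (g n) • a₀) → π p` and
`γ n • π c → π p`, so `x⁺ = π p = x⁻`.
-/

open Filter Topology Matrix ComplexConjugate

-- Mathlib's instances are stated for its own topology on `SL n R`, of which the instance on
-- `SL2C` above is a definitional copy that instance search does not see through.
instance : IsTopologicalGroup SL2C := SpecialLinearGroup.topologicalGroup

instance : T1Space SL2C := SpecialLinearGroup.instT1Space

instance : IsClosed (Subgroup.center SL2C : Set SL2C) := by
  rw [Subgroup.coe_center, ← Set.centralizer_univ]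
  exact Set.isClosed_centralizer _

theorem Projectivization.mk_eq_mk_iff_mul_eq_mul {K : Type*} [Field K] {v w : Fin 2 → K}
    (hv : v ≠ 0) (hw : w ≠ 0) : mk K v hv = mk K w hw ↔ v 0 * w 1 = v 1 * w 0 := by
  rw [mk_eq_mk_iff']
  constructor
  · rintro ⟨a, rfl⟩
    simp only [Pi.smul_apply, smul_eq_mul]
    ring
  · intro hcross
    by_cases hw0 : w 0 = 0
    · have hw1 : w 1 ≠ 0 := fun hw1 => hw (funext fun i => by fin_cases i <;> assumption)
      have hv0 : v 0 = 0 := by simpa [hw0, hw1] using hcross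
      refine ⟨v 1 / w 1, funext fun i => ?_⟩
      fin_cases i <;> simp [hw0, hv0, hw1]
    · refine ⟨v 0 / w 0, funext fun i => ?_⟩
      fin_cases i
      · simp [hw0]
      · simp [div_mul_eq_mul_div, div_eq_iff hw0, hcross]

theorem Projectivization.mk_eq_mk_of_finrank_le_one {K V : Type*} [DivisionRing K]
    [AddCommGroup V] [Module K V] [FiniteDimensional K V] {W : Submodule K V}
    (hW : Module.finrank K W ≤ 1) {v w : V} (hv : v ≠ 0) (hw : w ≠ 0) (hvW : v ∈ W)
    (hwW : w ∈ W) : mk K v hv = mk K w hw := by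
  obtain ⟨u, hu⟩ := finrank_le_one_iff.1 hW
  obtain ⟨a, ha⟩ := hu ⟨v, hvW⟩
  obtain ⟨b, hb⟩ := hu ⟨w, hwW⟩
  replace ha : a • (u : V) = v := congrArg Subtype.val ha
  replace hb : b • (u : V) = w := congrArg Subtype.val hb
  have hb0 : b ≠ 0 := by rintro rfl; exact hw (by simp [← hb])
  refine (mk_eq_mk_iff' K v w hv hw).2 ⟨a * b⁻¹, ?_⟩
  rw [← ha, ← hb, smul_smul, inv_mul_cancel_right₀ hb0]

theorem Matrix.exists_mk_mulVec_eq_of_det_eq_zero {K : Type*} [Field K]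
    {B : Matrix (Fin 2) (Fin 2) K} (hB : B ≠ 0) (hdet : B.det = 0) :
    ∃ q p : Projectivization K (Fin 2 → K), ∀ (w : Fin 2 → K) (hw : w ≠ 0),
      Projectivization.mk K w hw ≠ q →
        ∃ hBw : B *ᵥ w ≠ 0, Projectivization.mk K (B *ᵥ w) hBw = p := by
  obtain ⟨k, hk0, hk⟩ := exists_mulVec_eq_zero_iff.2 hdet
  have hker : LinearMap.ker (toLin' B) ≠ ⊥ :=
    (Submodule.ne_bot_iff _).2 ⟨k, by simpa using hk, hk0⟩
  have hrange : LinearMap.range (toLin' B) ≠ ⊥ := by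
    rw [Ne, LinearMap.range_eq_bot, LinearEquiv.map_eq_zero_iff]
    exact hB
  obtain ⟨r, hrB, hr0⟩ := Submodule.exists_mem_ne_zero_of_ne_bot hrange
  have hdim := LinearMap.finrank_range_add_finrank_ker (toLin' B)
  rw [Module.finrank_fin_fun] at hdim
  have hker1 : Module.finrank K (LinearMap.ker (toLin' B)) ≤ 1 := by
    have := mt Submodule.finrank_eq_zero.1 hrange
    omega
  have hrange1 : Module.finrank K (LinearMap.range (toLin' B)) ≤ 1 := by
    have := mt Submodule.finrank_eq_zero.1 hker
    omega
  refine ⟨Projectivization.mk K k hk0, Projectivization.mk K r hr0, fun w hw hwq => ?_⟩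
  have hBw : B *ᵥ w ≠ 0 := fun h =>
    hwq (Projectivization.mk_eq_mk_of_finrank_le_one hker1 hw hk0 (by simpa using h)
      (by simpa using hk))
  exact ⟨hBw, Projectivization.mk_eq_mk_of_finrank_le_one hrange1 hBw hr0 ⟨w, by simp⟩ hrB⟩

namespace Matrix.SpecialLinearGroup

variable {n R : Type*} [Fintype n] [DecidableEq n]

theorem coe_ne_zero [CommRing R] [Nontrivial R] [Nonempty n] (A : SpecialLinearGroup n R) :
    (A : Matrix n n R) ≠ 0 :=
  fun h => A.det_ne_zero (by simp [h])

theorem mulVec_ne_zero [Field R] (A : SpecialLinearGroup n R) {v : n → R} (hv : v ≠ 0) :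
    (A : Matrix n n R) *ᵥ v ≠ 0 :=
  ((mulVec_injective_iff_isUnit.2 ((isUnit_iff_isUnit_det _).2 (by simp))).ne_iff'
    (mulVec_zero _)).2 hv

end Matrix.SpecialLinearGroup

namespace CP1

theorem isOpenQuotientMap_mk' :
    IsOpenQuotientMap (Projectivization.mk' ℂ : {v : Fin 2 → ℂ // v ≠ 0} → CP1) := by
  refine ⟨Quotient.mk_surjective, continuous_quot_mk, fun U hU => ?_⟩
  have hsat : Projectivization.mk' ℂ ⁻¹' (Projectivization.mk' ℂ '' U) =
      ⋃ t : ℂˣ, (fun v : {v : Fin 2 → ℂ // v ≠ 0} =>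
        (⟨t • v.1, (smul_ne_zero_iff_ne t).2 v.2⟩ : {v : Fin 2 → ℂ // v ≠ 0})) ⁻¹' U := by
    ext v
    simp only [Set.mem_preimage, Set.mem_image, Set.mem_iUnion, Projectivization.mk'_eq_mk,
      Projectivization.mk_eq_mk_iff]
    constructor
    · rintro ⟨u, hu, t, htu⟩
      exact ⟨t, by convert hu⟩
    · rintro ⟨t, ht⟩
      exact ⟨_, ht, t, rfl⟩
  have hopen : IsOpen (Projectivization.mk' ℂ ⁻¹' (Projectivization.mk' ℂ '' U)) :=
    hsat ▸ isOpen_iUnion fun t => hU.preimage (by fun_prop)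
  exact isOpen_coinduced.2 hopen

instance : T2Space CP1 := by
  rw [t2Space_iff_of_isOpenQuotientMap isOpenQuotientMap_mk']
  have : {q : {v : Fin 2 → ℂ // v ≠ 0} × {v : Fin 2 → ℂ // v ≠ 0} |
      Projectivization.mk' ℂ q.1 = Projectivization.mk' ℂ q.2} =
      Prod.map Subtype.val Subtype.val ⁻¹'
        {p : (Fin 2 → ℂ) × (Fin 2 → ℂ) | p.1 0 * p.2 1 = p.1 1 * p.2 0} := by
    ext q
    exact Projectivization.mk_eq_mk_iff_mul_eq_mul q.1.2 q.2.2
  rw [this]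
  exact (isClosed_eq (by fun_prop) (by fun_prop)).preimage
    (continuous_subtype_val.prodMap continuous_subtype_val)

theorem tendsto_mk {ι : Type*} {l : Filter ι} {u : ι → Fin 2 → ℂ} (hu : ∀ i, u i ≠ 0)
    {v : Fin 2 → ℂ} (hv : v ≠ 0) (h : Tendsto u l (𝓝 v)) :
    Tendsto (fun i => Projectivization.mk ℂ (u i) (hu i)) l (𝓝 (Projectivization.mk ℂ v hv)) :=
  (continuous_quot_mk.tendsto (⟨v, hv⟩ : {v : Fin 2 → ℂ // v ≠ 0})).comp
    (tendsto_subtype_rng.2 h)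

theorem mk_smul_mk (A : SL2C) {v : Fin 2 → ℂ} (hv : v ≠ 0) :
    (A : PSL2C) • Projectivization.mk ℂ v hv =
      Projectivization.mk ℂ ((A : Matrix (Fin 2) (Fin 2) ℂ) *ᵥ v) (A.mulVec_ne_zero hv) :=
  (sl2smul_mk A v hv).trans
    (projmk_congr _ (by rw [SpecialLinearGroup.toLin'_apply, Matrix.toLin'_apply]))

theorem tendsto_smul_mk_of_tendsto_smul {A : ℕ → SL2C} {c : ℕ → ℝ} (hc : ∀ k, c k ≠ 0)
    {B : Matrix (Fin 2) (Fin 2) ℂ}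
    (hAB : Tendsto (fun k => c k • (A k : Matrix (Fin 2) (Fin 2) ℂ)) atTop (𝓝 B))
    {w : Fin 2 → ℂ} (hw : w ≠ 0) (hBw : B *ᵥ w ≠ 0) :
    Tendsto (fun k => (A k : PSL2C) • Projectivization.mk ℂ w hw) atTop
      (𝓝 (Projectivization.mk ℂ (B *ᵥ w) hBw)) := by
  have hcAw : ∀ k, (c k • (A k : Matrix (Fin 2) (Fin 2) ℂ)) *ᵥ w ≠ 0 := fun k => by
    rw [smul_mulVec]
    exact smul_ne_zero (hc k) ((A k).mulVec_ne_zero hw)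
  have hscale : ∀ k, (A k : PSL2C) • Projectivization.mk ℂ w hw =
      Projectivization.mk ℂ _ (hcAw k) := fun k => by
    rw [mk_smul_mk, Projectivization.mk_eq_mk_iff']
    refine ⟨((c k : ℂ))⁻¹, ?_⟩
    rw [smul_mulVec, RCLike.real_smul_eq_coe_smul (K := ℂ), smul_smul]
    simp [hc k]
  simpa only [hscale] using
    tendsto_mk hcAw hBw (((continuous_id.matrix_mulVec continuous_const).tendsto B).comp hAB)

end CP1

theorem mk_mem_realPoints_iff {v : Fin 2 → ℂ} (hv : v ≠ 0) :
    Projectivization.mk ℂ v hv ∈ realPoints ↔ (v 0 * conj (v 1)).im = 0 := by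
  constructor
  · rintro ⟨w, hw, hwre, hvw⟩
    obtain ⟨a, rfl⟩ := (Projectivization.mk_eq_mk_iff' ℂ _ _ hv hw).1 hvw
    simp only [Pi.smul_apply, smul_eq_mul, map_mul, Complex.mul_im, Complex.mul_re,
      Complex.conj_re, Complex.conj_im, hwre]
    ring
  · intro h
    have of_smul : ∀ t : ℂ, t ≠ 0 → (∀ j, ((t • v) j).im = 0) →
        Projectivization.mk ℂ v hv ∈ realPoints := fun t ht hre =>
      ⟨t • v, smul_ne_zero ht hv, hre,
        (Projectivization.mk_eq_mk_iff' ℂ _ _ hv _).2 ⟨t⁻¹, by simp [smul_smul, ht]⟩⟩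
    by_cases h0 : v 0 = 0
    · have h1 : v 1 ≠ 0 := fun h1 => hv (funext fun i => by fin_cases i <;> assumption)
      refine of_smul (conj (v 1)) (by simpa using h1) fun j => ?_
      fin_cases j
      · simp [h0]
      · simp only [Fin.mk_one, Pi.smul_apply, smul_eq_mul, Complex.mul_im, Complex.conj_re,
          Complex.conj_im]
        ring
    · refine of_smul (conj (v 0)) (by simpa using h0) fun j => ?_
      fin_cases j <;> simp [Complex.mul_im] at h ⊢ <;> linarith

theorem isClosed_realPoints : IsClosed realPoints := by
  rw [← CP1.isOpenQuotientMap_mk'.isQuotientMap.isClosed_preimage]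
  have : Projectivization.mk' ℂ ⁻¹' realPoints =
      Subtype.val ⁻¹' {v : Fin 2 → ℂ | (v 0 * conj (v 1)).im = 0} := by
    ext v
    exact mk_mem_realPoints_iff v.2
  rw [this]
  exact (isClosed_eq (by fun_prop) continuous_const).preimage continuous_subtype_val

theorem infinite_realPoints : realPoints.Infinite := by
  have hne : ∀ r : ℝ, ![1, (r : ℂ)] ≠ 0 := fun r h => by simpa using congrFun h 0
  refine Set.infinite_of_injective_forall_mem (f := fun r => Projectivization.mk ℂ _ (hne r))
    (fun r s hrs => ?_) fun r => ⟨_, hne r, fun i => by fin_cases i <;> simp, rfl⟩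
  simpa using ((Projectivization.mk_eq_mk_iff_mul_eq_mul _ _).1 hrs).symm

theorem TendstoConstUniformlyAway.tendsto_smul {γ : ℕ → PSL2C} {q p : CP1}
    (h : TendstoConstUniformlyAway γ q p) {y : CP1} (hy : y ≠ q) :
    Tendsto (fun n => γ n • y) atTop (𝓝 p) := fun U hU =>
  (h U hU {y} isCompact_singleton (Ne.symm hy)).mono fun _ hn => hn y rfl

section Elementwise

open scoped Matrix.Norms.Elementwise

namespace Matrix.SpecialLinearGroup

variable {n 𝕜 : Type*} [Fintype n] [DecidableEq n] [RCLike 𝕜]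

theorem tendsto_norm_atTop_of_tendsto_cocompact {X : Type*} [TopologicalSpace X]
    {f : SpecialLinearGroup n 𝕜 → X} (hf : Continuous f) {ι : Type*} {l : Filter ι}
    {A : ι → SpecialLinearGroup n 𝕜} (h : Tendsto (f ∘ A) l (cocompact X)) :
    Tendsto (fun i => ‖(A i : Matrix n n 𝕜)‖) l atTop := by
  refine tendsto_atTop.2 fun b => ?_
  have hK : IsCompact (f '' ((↑) ⁻¹' Metric.closedBall (0 : Matrix n n 𝕜) b)) :=
    (isClosedEmbedding_val.isCompact_preimage (isCompact_closedBall _ _)).image hf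
  filter_upwards [h.eventually hK.compl_mem_cocompact] with i hi
  exact le_of_lt (not_le.1 fun hle => hi ⟨A i, mem_closedBall_zero_iff.2 hle, rfl⟩)

theorem exists_subseq_tendsto_inv_norm_smul [Nonempty n] {A : ℕ → SpecialLinearGroup n 𝕜}
    (hA : Tendsto (fun k => ‖(A k : Matrix n n 𝕜)‖) atTop atTop) :
    ∃ B : Matrix n n 𝕜, B ≠ 0 ∧ B.det = 0 ∧ ∃ φ : ℕ → ℕ, StrictMono φ ∧
      Tendsto (fun k => ‖(A (φ k) : Matrix n n 𝕜)‖⁻¹ • (A (φ k) : Matrix n n 𝕜)) atTop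
        (𝓝 B) := by
  have hsphere : ∀ k, ‖(A k : Matrix n n 𝕜)‖⁻¹ • (A k : Matrix n n 𝕜) ∈ Metric.sphere 0 1 :=
    fun k => by simp [norm_smul, (A k).coe_ne_zero]
  obtain ⟨B, hB, φ, hφ, hlim⟩ := (isCompact_sphere (0 : Matrix n n 𝕜) 1).tendsto_subseq hsphere
  refine ⟨B, ne_zero_of_mem_unit_sphere ⟨B, hB⟩, ?_, φ, hφ, hlim⟩
  have hdet : ∀ k, (‖(A k : Matrix n n 𝕜)‖⁻¹ • (A k : Matrix n n 𝕜)).det =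
      ((‖(A k : Matrix n n 𝕜)‖⁻¹ : ℝ) : 𝕜) ^ Fintype.card n := fun k => by
    rw [RCLike.real_smul_eq_coe_smul (K := 𝕜), det_smul, (A k).2, mul_one]
  have hzero : Tendsto (fun k => ((‖(A (φ k) : Matrix n n 𝕜)‖⁻¹ : ℝ) : 𝕜) ^ Fintype.card n)
      atTop (𝓝 0) := by
    have := ((RCLike.continuous_ofReal (K := 𝕜)).tendsto 0).comp
      (tendsto_inv_atTop_zero.comp (hA.comp hφ.tendsto_atTop))
    simpa [Fintype.card_ne_zero] using this.pow (Fintype.card n)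
  refine tendsto_nhds_unique ?_ hzero
  simpa only [Function.comp_def, id, hdet] using (continuous_id.matrix_det.tendsto B).comp hlim

end Matrix.SpecialLinearGroup

theorem exists_subseq_tendsto_smul_of_tendsto_cocompact {δ : ℕ → PSL2C}
    (hδ : Tendsto δ atTop (cocompact PSL2C)) :
    ∃ φ : ℕ → ℕ, StrictMono φ ∧ ∃ q p : CP1, ∀ z, z ≠ q →
      Tendsto (fun k => δ (φ k) • z) atTop (𝓝 p) := by
  choose A hA using fun k => QuotientGroup.mk_surjective (δ k)
  have hAδ : Tendsto (fun k => (A k : PSL2C)) atTop (cocompact PSL2C) := by simpa only [hA]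
  have hnorm := SpecialLinearGroup.tendsto_norm_atTop_of_tendsto_cocompact
    (f := (QuotientGroup.mk : SL2C → PSL2C)) continuous_quot_mk hAδ
  obtain ⟨B, hB0, hdet, φ, hφ, hAB⟩ := SpecialLinearGroup.exists_subseq_tendsto_inv_norm_smul hnorm
  obtain ⟨q, p, hqp⟩ := exists_mk_mulVec_eq_of_det_eq_zero hB0 hdet
  refine ⟨φ, hφ, q, p, fun z hzq => ?_⟩
  induction z using Projectivization.ind with
  | h w hw =>
    obtain ⟨hBw, rfl⟩ := hqp w hw hzq
    simpa only [hA] using CP1.tendsto_smul_mk_of_tendsto_smul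
      (fun k => inv_ne_zero (norm_ne_zero_iff.2 (A (φ k)).coe_ne_zero)) hAB hw hBw

end Elementwise

theorem not_conicalLimitPoint_of_multiple_preimages_fuchsian_general
    (F : Type) [Group F] (ρ₀ : F →* PSL2C)
    (hfaithful : Function.Injective ρ₀)
    (hdisc : DiscreteTopology ρ₀.range)
    (hinv : ∀ (g : F) (a : realPoints), ρ₀ g • (a : CP1) ∈ realPoints)
    (ρ : F →* PSL2C) (π : realPoints → CP1) (hπ : Continuous π)
    (heqv : ∀ (g : F) (a : realPoints), π ⟨ρ₀ g • (a : CP1), hinv g a⟩ = ρ g • π a)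
    (x : CP1) (hfin : (π ⁻¹' {x}).Finite)
    (h2 : ∃ a b : realPoints, π a = x ∧ π b = x ∧ a ≠ b) :
    ¬ ∃ (γ : ℕ → PSL2C) (xp xm : CP1), (∀ n, γ n ∈ ρ.range) ∧ Function.Injective γ ∧
        xp ≠ xm ∧ Filter.Tendsto (fun n => γ n • x) Filter.atTop (nhds xp) ∧
        TendstoConstUniformlyAway γ x xm := by
  rintro ⟨γ, xp, xm, hγρ, hγ, hpm, hxp, hxm⟩
  obtain ⟨a, b, ha, hb, hab⟩ := h2
  choose g hg using hγρ
  have hg_inj : Function.Injective g := fun m n h => hγ (by rw [← hg, ← hg, h])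
  have hδ : Tendsto (fun n => ρ₀ (g n)) atTop (cocompact PSL2C) :=
    (ρ₀.tendsto_coe_cofinite_of_discrete hfaithful (isDiscrete_iff_discreteTopology.2 hdisc)).comp
      (Nat.cofinite_eq_atTop ▸ hg_inj.tendsto_cofinite)
  obtain ⟨φ, hφ, q, p, hp⟩ := exists_subseq_tendsto_smul_of_tendsto_cocompact hδ
  obtain ⟨a₀, ha₀, ha₀q⟩ : ∃ a₀ : realPoints, π a₀ = x ∧ (a₀ : CP1) ≠ q := by
    by_cases haq : (a : CP1) = q
    · exact ⟨b, hb, fun hbq => hab (Subtype.ext (haq.trans hbq.symm))⟩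
    · exact ⟨a, ha, haq⟩
  obtain ⟨c, hcx, hcq⟩ : ∃ c : realPoints, π c ≠ x ∧ (c : CP1) ≠ q := by
    have : Infinite realPoints := infinite_realPoints.to_subtype
    obtain ⟨c, hc⟩ := (hfin.union ((Set.finite_singleton q).preimage
      Subtype.val_injective.injOn)).infinite_compl.nonempty
    exact ⟨c, by simpa [not_or] using hc⟩
  have hpR : p ∈ realPoints := isClosed_realPoints.mem_of_tendsto (hp a₀ ha₀q)
    (Eventually.of_forall fun _ => hinv _ a₀)
  have hlim : ∀ z : realPoints, (z : CP1) ≠ q →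
      Tendsto (fun n => γ (φ n) • π z) atTop (𝓝 (π ⟨p, hpR⟩)) := fun z hz => by
    simpa only [← hg, ← heqv, Function.comp_def] using
      (hπ.tendsto _).comp (tendsto_subtype_rng.2 (hp z hz))
  apply hpm
  rw [← ha₀] at hxp
  rw [tendsto_nhds_unique (hxp.comp hφ.tendsto_atTop) (hlim a₀ ha₀q),
    tendsto_nhds_unique ((hxm.tendsto_smul hcx).comp hφ.tendsto_atTop) (hlim c hcq)]

/-- Points of `ℂP¹` with more than one preimage under a continuous equivariant boundary map
defined on `ℝP¹` (a Cannon–Thurston map for a Fuchsian group `ρ₀(F)`) are not conical limit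
points of `ρ(F)`. -/
theorem not_conicalLimitPoint_of_multiple_preimages_fuchsian
    (F : Type) [Group F] (ρ₀ : F →* PSL2C)
    (hρ₀R : ∀ g : F, ρ₀ g ∈ PSL2R)
    (hfaithful : Function.Injective ρ₀)
    (hdisc : DiscreteTopology ρ₀.range)
    (hinv : ∀ (g : F) (a : realPoints), ρ₀ g • (a : CP1) ∈ realPoints)
    (ρ : F →* PSL2C) (π : realPoints → CP1) (hπ : Continuous π)
    (heqv : ∀ (g : F) (a : realPoints), π ⟨ρ₀ g • (a : CP1), hinv g a⟩ = ρ g • π a)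
    (x : CP1) (hfin : (π ⁻¹' {x}).Finite)
    (h2 : ∃ a b : realPoints, π a = x ∧ π b = x ∧ a ≠ b) :
    ¬ ∃ (γ : ℕ → PSL2C) (xp xm : CP1), (∀ n, γ n ∈ ρ.range) ∧ Function.Injective γ ∧
        xp ≠ xm ∧ Filter.Tendsto (fun n => γ n • x) Filter.atTop (nhds xp) ∧
        TendstoConstUniformlyAway γ x xm :=
  not_conicalLimitPoint_of_multiple_preimages_fuchsian_general F ρ₀ hfaithful hdisc hinv ρ π hπ heqv
    x hfin h2
end
end

section
/- Let G be a group acting on a set X and let x₀ ∈ X. Suppose that the stabilizer Stab_G(x₀) = {g ∈ G : g·x₀ = x₀} is finitely generated, and that there exists a finitely generated subgroup H ≤ G whose induced action on X has only finitely many orbits. Then G is finitely generated. -/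
set_option synthInstance.maxHeartbeats 1000000

noncomputable section

/-! ### Basic definitions: limit sets, commensurators, parabolicity, lattices -/

open Filter Topology

/-! Choosing one element `f` of `G` for each `H`-orbit that meets `G • x` writes every `g ∈ G` as
`h * f * s` with `h ∈ H` and `s` in the stabilizer of `x`. So `G` is generated by `H`, the
stabilizer and these finitely many representatives. -/

open MulAction Subgroup

section

variable {G X : Type*} [Group G] [MulAction G X]

theorem MulAction.exists_finite_forall_eq_mul_mul_of_finite_orbitRel_quotient (H : Subgroup G)
    [Finite (orbitRel.Quotient H X)] (x : X) :
    ∃ F : Set G, F.Finite ∧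
      ∀ g : G, ∃ h ∈ H, ∃ f ∈ F, ∃ s ∈ stabilizer G x, g = h * f * s := by
  let orbitOf : G → orbitRel.Quotient H X := fun g => ⟦g • x⟧
  let rep := Set.rangeSplitting orbitOf
  refine ⟨Set.range rep, Set.finite_range rep, fun g => ?_⟩
  set f := rep ⟨orbitOf g, g, rfl⟩
  obtain ⟨h, hh⟩ : ∃ h : H, h • g • x = f • x :=
    Quotient.exact (Set.apply_rangeSplitting orbitOf ⟨orbitOf g, g, rfl⟩)
  refine ⟨h⁻¹, inv_mem h.2, f, Set.mem_range_self _, f⁻¹ * h * g, ?_, by group⟩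
  rw [mem_stabilizer_iff, mul_smul, mul_smul, inv_smul_eq_iff]
  exact hh

theorem MulAction.exists_finite_sup_sup_closure_eq_top (H : Subgroup G)
    [Finite (orbitRel.Quotient H X)] (x : X) :
    ∃ F : Set G, F.Finite ∧ H ⊔ stabilizer G x ⊔ closure F = ⊤ := by
  obtain ⟨F, hF, hdecomp⟩ := exists_finite_forall_eq_mul_mul_of_finite_orbitRel_quotient H x
  refine ⟨F, hF, eq_top_iff.2 fun g _ => ?_⟩
  obtain ⟨h, hh, f, hf, s, hs, rfl⟩ := hdecomp g
  exact mul_mem (mul_mem (mem_sup_left (mem_sup_left hh)) (mem_sup_right (subset_closure hf)))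
    (mem_sup_left (mem_sup_right hs))

end

/-- If a group `G` acts on a set `X` with a finitely generated stabilizer of some point
`x₀ ∈ X`, and some finitely generated subgroup `H ≤ G` has only finitely many orbits on `X`,
then `G` is finitely generated. -/
theorem fg_of_fg_stabilizer_and_fg_subgroup_cofinite_orbits
    (G X : Type) [Group G] [MulAction G X] (x₀ : X)
    (hstab : (MulAction.stabilizer G x₀).FG)
    (H : Subgroup G) (hH : H.FG)
    (horb : Finite (MulAction.orbitRel.Quotient H X)) :
    Group.FG G := by
  obtain ⟨F, hF, htop⟩ := exists_finite_sup_sup_closure_eq_top H x₀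
  rw [Group.fg_def, ← htop]
  exact (hH.sup hstab).sup ((fg_iff _).2 ⟨F, rfl, hF⟩)
end
end
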